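/- Let G be a finite group acting faithfully on an irreducible variety X over a field k, and let H ≤ G be a subgroup. If there exist: a dominant rational map φ: Y ⇢ Y' from Y = X/G to an integral variety Y', and a G-torsor X' → Y' such that X ≅ Y ×_{Y'} X' generically, then setting Z = X/H and Z' = X'/H, the induced rational map Z ⇢ Z' satisfies that X is generically equal to Z ×_{Z'} X'. Consequently ed_H(X) ≤ ed_G(X). -/
import Mathlib


variable (k K G : Type) [Field k] [Field K] [Algebra k K] [Group G]

/-- The transcendence degree of a field extension (the dimension of a variety with that
function field). -/
noncomputable def stmt17trdeg (k K : Type) [Field k] [Field K] [Algebra k K] : Cardinal :=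
  ⨆ s : { s : Set K // AlgebraicIndependent k ((↑) : s → K) }, Cardinal.mk s.1

/-- The fixed field of a subgroup `S ≤ G` acting on `K` via `act` (the function field of the
quotient variety `X/S`). -/
def stmt17fixed (act : G →* (K ≃ₐ[k] K)) (S : Subgroup G) : IntermediateField k K where
  carrier := { x : K | ∀ g ∈ S, act g x = x }
  mul_mem' := fun ha hb => by intro g hg; rw [map_mul, ha g hg, hb g hg]
  one_mem' := by intro g hg; rw [map_one]
  add_mem' := fun ha hb => by intro g hg; rw [map_add, ha g hg, hb g hg]
  zero_mem' := by intro g hg; rw [map_zero]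
  inv_mem' := fun x hx => by intro g hg; rw [map_inv₀, hx g hg]
  algebraMap_mem' := fun a g _ => (act g).commutes a

/-- The essential dimension of the action of a subgroup `S ≤ G` on the function field `K` of
a variety: the least transcendence degree of an `S`-stable intermediate field on which `S`
still acts faithfully (i.e. the dimension of the smallest `S`-compression). -/
noncomputable def stmt17edim (act : G →* (K ≃ₐ[k] K)) (S : Subgroup G) : Cardinal :=
  sInf { c : Cardinal | ∃ F : IntermediateField k K,
    (∀ g ∈ S, ∀ x ∈ F, act g x ∈ F) ∧
    (∀ g ∈ S, (∀ x ∈ F, act g x = x) → g = 1) ∧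
    c = stmt17trdeg k ↥F }

/-- Let `G` be a finite group acting faithfully on an irreducible variety `X` over `k`, with
function field `K = k(X)`, and let `H ≤ G`.  Suppose given a dominant rational map
`φ : Y = X/G ⇢ Y'` and a `G`-torsor `X' → Y'` pulling back generically to `X → Y`: in terms
of function fields, a `G`-stable intermediate field `K' = k(X') ⊆ K` on which `G` acts
faithfully (with `k(Y') = (K')^G`), such that `K` is the compositum of `K^G = k(Y)` and `K'`
(i.e. `X ≅ Y ×_{Y'} X'` generically).  Then, with `Z = X/H` and `Z' = X'/H`, `X` is
generically equal to `Z ×_{Z'} X'`: `K` is the compositum of `K^H = k(Z)` and `K'`.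
Consequently `ed_H(X) ≤ ed_G(X)`. -/
theorem stmt17 [Finite G] (H : Subgroup G)
    (act : G →* (K ≃ₐ[k] K)) (hfaithful : Function.Injective act)
    (K' : IntermediateField k K)
    (hstable : ∀ (g : G), ∀ x ∈ K', act g x ∈ K')
    (hfaithful' : ∀ g : G, (∀ x ∈ K', act g x = x) → g = 1)
    (hgen : stmt17fixed k K G act ⊤ ⊔ K' = ⊤) :
    stmt17fixed k K G act H ⊔ K' = ⊤ ∧
    stmt17edim k K G act H ≤ stmt17edim k K G act ⊤ := by
  constructor
  · refine le_antisymm le_top ?_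
    rw [← hgen]
    exact sup_le_sup_right (fun x hx g hg => hx g trivial) K'
  · refine csInf_le_csInf (OrderBot.bddBelow _)
      ⟨stmt17trdeg k K', K', fun g _ => hstable g, fun g _ h => hfaithful' g h, rfl⟩ ?_
    rintro c ⟨F, h1, h2, h3⟩
    exact ⟨F, fun g _ => h1 g trivial, fun g _ h => h2 g trivial h, h3⟩
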